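/- arXiv:1503.06543 — 5 statements merged into one kernel-verified Lean document; each statement's English description precedes it below -/
import Mathlib

section
/- Let T : X → X be a map on a Banach space X, x_0 ∈ X, and suppose ‖T(x) - T(y)‖ ≤ φ'(v)·‖x - y‖ whenever x, y lie in the closed ball B̄(x_0, v) for v ≤ r, where φ : [0,r] → ℝ is a continuously differentiable, non-decreasing, convex-type majorant with ‖T(x_0) - x_0‖ ≤ φ(0), and the equation v = φ(v) has minimal solution v_* ∈ [0,r]. Then the iterates x_{k+1} = T(x_k) remain in B̄(x_0, v_*), satisfy ‖x_{k+1} - x_k‖ ≤ v_{k+1} - v_k for the majorizing sequence v_0 = 0, v_{k+1} = φ(v_k), and converge to a fixed point x_* of T with ‖x_* - x_k‖ ≤ v_* - v_k. -/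
/-!
The majorizing sequence `v` increases to the least fixed point `vstar` of `φ`. The key estimate is
`‖T z - T y‖ ≤ φ b - φ a` whenever `‖y - x0‖ ≤ a` and `‖z - y‖ ≤ b - a`: the point of the segment
from `y` to `z` at parameter `s` lies in the ball of radius `a + s (b - a)`, on which `T` is
`φ'`-Lipschitz, and integrating `φ'` over `[a, b]` gives `φ b - φ a`. By induction the steps of `x`
are then bounded by those of `v`, so `x` is Cauchy, and its limit is fixed by the continuity of `T`.
-/

open Set Filter Metric Topology

theorem dist_le_sub_of_dist_le_deriv_mul {α : Type*} [PseudoMetricSpace α] {g : ℝ → α}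
    {B K : ℝ → ℝ} {a b : ℝ} (hab : a ≤ b) (hg : ContinuousOn g (Icc a b))
    (hB : ContinuousOn B (Icc a b)) (hB' : ∀ s ∈ Ico a b, HasDerivWithinAt B (K s) (Ici s) s)
    (hK : ContinuousOn K (Icc a b))
    (hgK : ∀ s t, a ≤ s → s ≤ t → t ≤ b → dist (g t) (g s) ≤ K t * (t - s)) :
    dist (g b) (g a) ≤ B b - B a := by
  have hslope : ∀ s ∈ Ico a b, ∀ ρ, K s < ρ →
      ∃ᶠ u in 𝓝[>] s, slope (fun t => dist (g t) (g a)) s u < ρ := by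
    intro s hs ρ hρ
    have hKs : ContinuousWithinAt K (Ici s) s :=
      (continuousWithinAt_Ico_iff_Ici hs.2).1 <| (hK s (Ico_subset_Icc_self hs)).mono
        ((Ico_subset_Ico_left hs.1).trans Ico_subset_Icc_self)
    refine Eventually.frequently ?_
    filter_upwards [Ioo_mem_nhdsGT hs.2, (hKs.mono Ioi_subset_Ici_self).eventually (gt_mem_nhds hρ)]
      with u hu hKu
    have hus : 0 < u - s := sub_pos.2 hu.1
    rw [slope_def_field, div_lt_iff₀ hus]
    calc dist (g u) (g a) - dist (g s) (g a) ≤ dist (g u) (g s) := by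
          linarith [dist_triangle (g u) (g s) (g a)]
      _ ≤ K u * (u - s) := hgK s u hs.1 hu.1.le hu.2.le
      _ < ρ * (u - s) := mul_lt_mul_of_pos_right hKu hus
  have := image_le_of_liminf_slope_right_le_deriv_boundary (B := fun t => B t - B a)
    (by fun_prop) (by simp) (hB.sub continuousOn_const)
    (fun s hs => (hB' s hs).sub_const (B a)) hslope (right_mem_Icc.2 hab)
  simpa using this

section Majorant

variable {X : Type*} [SeminormedAddCommGroup X] {T : X → X} {x0 : X} {r : ℝ} {φ φ' : ℝ → ℝ}

theorem continuousOn_closedBall_of_majorant (hφ'nonneg : ∀ v ∈ Icc (0:ℝ) r, 0 ≤ φ' v)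
    (hlip : ∀ v ∈ Icc (0:ℝ) r, ∀ x ∈ closedBall x0 v, ∀ y ∈ closedBall x0 v,
      ‖T x - T y‖ ≤ φ' v * ‖x - y‖)
    {ρ : ℝ} (hρ : ρ ∈ Icc 0 r) : ContinuousOn T (closedBall x0 ρ) := by
  refine (LipschitzOnWith.of_dist_le_mul fun x hx y hy => ?_).continuousOn (K := (φ' ρ).toNNReal)
  rw [Real.coe_toNNReal _ (hφ'nonneg ρ hρ), dist_eq_norm, dist_eq_norm]
  exact hlip ρ hρ x hx y hy

variable [NormedSpace ℝ X]

theorem dist_le_sub_of_majorant (hderiv : ∀ v ∈ Icc (0:ℝ) r, HasDerivAt φ (φ' v) v)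
    (hφ'cont : ContinuousOn φ' (Icc 0 r)) (hφ'nonneg : ∀ v ∈ Icc (0:ℝ) r, 0 ≤ φ' v)
    (hlip : ∀ v ∈ Icc (0:ℝ) r, ∀ x ∈ closedBall x0 v, ∀ y ∈ closedBall x0 v,
      ‖T x - T y‖ ≤ φ' v * ‖x - y‖)
    {a b : ℝ} (ha : 0 ≤ a) (hab : a ≤ b) (hb : b ≤ r) {y z : X}
    (hy : dist y x0 ≤ a) (hz : dist z y ≤ b - a) :
    dist (T z) (T y) ≤ φ b - φ a := by
  set R : ℝ → ℝ := fun s => AffineMap.lineMap a b s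
  set p : ℝ → X := fun s => AffineMap.lineMap y z s
  have hR : ∀ s ∈ Icc (0:ℝ) 1, R s ∈ Icc 0 r := fun s hs =>
    (convex_Icc 0 r).lineMap_mem ⟨ha, hab.trans hb⟩ ⟨ha.trans hab, hb⟩ hs
  have hRmono : Monotone R := AffineMap.lineMap_mono hab
  have hp : ∀ s ∈ Icc (0:ℝ) 1, p s ∈ closedBall x0 (R s) := by
    intro s hs
    have hps : dist (p s) y ≤ s * (b - a) := by
      rw [dist_lineMap_left, Real.norm_of_nonneg hs.1, dist_comm]
      exact mul_le_mul_of_nonneg_left hz hs.1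
    rw [mem_closedBall]
    calc dist (p s) x0 ≤ dist (p s) y + dist y x0 := dist_triangle _ _ _
      _ ≤ R s := by simp only [R, AffineMap.lineMap_apply_ring']; linarith
  have key := dist_le_sub_of_dist_le_deriv_mul (g := T ∘ p) (B := φ ∘ R)
    (K := fun s => φ' (R s) * (b - a)) zero_le_one ?_ ?_ ?_ ?_ ?_
  · simpa [p, R] using key
  · have hpb : MapsTo p (Icc 0 1) (closedBall x0 b) := fun s hs =>
      closedBall_subset_closedBall (by simpa [R] using hRmono hs.2) (hp s hs)
    exact (continuousOn_closedBall_of_majorant hφ'nonneg hlip ⟨ha.trans hab, hb⟩).comp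
      (AffineMap.lineMap_continuous.continuousOn) hpb
  · exact (HasDerivAt.continuousOn hderiv).comp AffineMap.lineMap_continuous.continuousOn hR
  · intro s hs
    exact ((hderiv (R s) (hR s (Ico_subset_Icc_self hs))).comp s
      AffineMap.hasDerivAt_lineMap).hasDerivWithinAt
  · exact (hφ'cont.comp AffineMap.lineMap_continuous.continuousOn hR).mul continuousOn_const
  · intro s t hs hst ht
    have hpt : p t ∈ closedBall x0 (R t) := hp t ⟨hs.trans hst, ht⟩
    have hps : p s ∈ closedBall x0 (R t) :=
      closedBall_subset_closedBall (hRmono hst) (hp s ⟨hs, hst.trans ht⟩)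
    calc dist (T (p t)) (T (p s)) ≤ φ' (R t) * dist (p t) (p s) := by
          simpa only [dist_eq_norm] using hlip (R t) (hR t ⟨hs.trans hst, ht⟩) _ hpt _ hps
      _ ≤ φ' (R t) * ((b - a) * (t - s)) := by
          gcongr
          · exact hφ'nonneg _ (hR t ⟨hs.trans hst, ht⟩)
          · rw [dist_lineMap_lineMap, Real.dist_eq, abs_of_nonneg (sub_nonneg.2 hst), dist_comm]
            rw [mul_comm (b - a)]; exact mul_le_mul_of_nonneg_left hz (sub_nonneg.2 hst)
      _ = φ' (R t) * (b - a) * (t - s) := by ring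

theorem dist_iterate_le_majorizing (hderiv : ∀ v ∈ Icc (0:ℝ) r, HasDerivAt φ (φ' v) v)
    (hφ'cont : ContinuousOn φ' (Icc 0 r)) (hφ'nonneg : ∀ v ∈ Icc (0:ℝ) r, 0 ≤ φ' v)
    (hlip : ∀ v ∈ Icc (0:ℝ) r, ∀ x ∈ closedBall x0 v, ∀ y ∈ closedBall x0 v,
      ‖T x - T y‖ ≤ φ' v * ‖x - y‖)
    (hη : ‖T x0 - x0‖ ≤ φ 0) {v : ℕ → ℝ} (hv : ∀ k, v k ∈ Icc 0 r) (hvmono : Monotone v)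
    (hv0 : v 0 = 0) (hvrec : ∀ k, v (k + 1) = φ (v k)) {x : ℕ → X} (hx0 : x 0 = x0)
    (hxrec : ∀ k, x (k + 1) = T (x k)) (k : ℕ) :
    dist (x k) x0 ≤ v k ∧ dist (x k) (x (k + 1)) ≤ v (k + 1) - v k := by
  induction k with
  | zero =>
    rw [hx0, hv0, dist_self, hxrec, hx0, hvrec, hv0, sub_zero, dist_comm, dist_eq_norm]
    exact ⟨le_rfl, hη⟩
  | succ k ih =>
    have hxk : dist (x (k + 1)) x0 ≤ v (k + 1) := by
      linarith [dist_triangle (x (k + 1)) (x k) x0, dist_comm (x k) (x (k + 1))]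
    refine ⟨hxk, ?_⟩
    have h := dist_le_sub_of_majorant hderiv hφ'cont hφ'nonneg hlip (hv k).1 (hvmono k.le_succ)
      (hv (k + 1)).2 ih.1 (by rw [dist_comm]; exact ih.2)
    rwa [← hxrec, ← hxrec, ← hvrec, ← hvrec, dist_comm] at h

end Majorant

section MajorizingSequence

variable {φ : ℝ → ℝ} {r vstar : ℝ} {v : ℕ → ℝ}

theorem majorizing_mem_Icc (hφ : MonotoneOn φ (Icc 0 r)) (hφ0 : 0 ≤ φ 0)
    (hvstar : vstar ∈ Icc 0 r) (hfix : φ vstar = vstar) (hv0 : v 0 = 0)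
    (hvrec : ∀ k, v (k + 1) = φ (v k)) (k : ℕ) : v k ∈ Icc 0 vstar := by
  induction k with
  | zero => rw [hv0]; exact ⟨le_rfl, hvstar.1⟩
  | succ k ih =>
    have hvk : v k ∈ Icc 0 r := ⟨ih.1, ih.2.trans hvstar.2⟩
    rw [hvrec]
    exact ⟨hφ0.trans (hφ ⟨le_rfl, hvk.1.trans hvk.2⟩ hvk ih.1), hfix ▸ hφ hvk hvstar ih.2⟩

theorem majorizing_monotone (hφ : MonotoneOn φ (Icc 0 r)) (hφ0 : 0 ≤ φ 0)
    (hv : ∀ k, v k ∈ Icc 0 r) (hv0 : v 0 = 0) (hvrec : ∀ k, v (k + 1) = φ (v k)) :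
    Monotone v := by
  refine monotone_nat_of_le_succ fun k => ?_
  induction k with
  | zero => rw [hvrec, hv0]; exact hφ0
  | succ k ih => rw [hvrec, hvrec (k + 1)]; exact hφ (hv k) (hv (k + 1)) ih

theorem tendsto_majorizing (hφ : ContinuousOn φ (Icc 0 r)) (hvstar : vstar ∈ Icc 0 r)
    (hmin : ∀ w ∈ Icc 0 r, φ w = w → vstar ≤ w) (hv : ∀ k, v k ∈ Icc 0 vstar)
    (hvmono : Monotone v) (hvrec : ∀ k, v (k + 1) = φ (v k)) :
    Tendsto v atTop (𝓝 vstar) := by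
  have hbdd : BddAbove (range v) := ⟨vstar, forall_mem_range.2 fun k => (hv k).2⟩
  have hlim : Tendsto v atTop (𝓝 (⨆ k, v k)) := tendsto_atTop_ciSup hvmono hbdd
  set L := ⨆ k, v k
  have hLvstar : L ≤ vstar := ciSup_le fun k => (hv k).2
  have hL : L ∈ Icc 0 r := ⟨(hv 0).1.trans (le_ciSup hbdd 0), hLvstar.trans hvstar.2⟩
  have hφL : φ L = L := by
    have hvr : Tendsto v atTop (𝓝[Icc 0 r] L) :=
      tendsto_nhdsWithin_iff.2 ⟨hlim, Eventually.of_forall fun k =>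
        ⟨(hv k).1, (hv k).2.trans hvstar.2⟩⟩
    refine tendsto_nhds_unique ((hφ L hL).tendsto.comp hvr) ?_
    simpa only [Function.comp_def, ← hvrec] using hlim.comp (tendsto_add_atTop_nat 1)
  rwa [le_antisymm hLvstar (hmin L hL hφL)] at hlim

end MajorizingSequence

section DistSuccLe

variable {α : Type*} [PseudoMetricSpace α] {x : ℕ → α} {v : ℕ → ℝ} {L : ℝ}

theorem dist_le_sub_of_dist_succ_le (h : ∀ k, dist (x k) (x (k + 1)) ≤ v (k + 1) - v k)
    {n m : ℕ} (hnm : n ≤ m) : dist (x n) (x m) ≤ v m - v n :=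
  (dist_le_Ico_sum_of_dist_le hnm fun {k} _ _ => h k).trans_eq (Finset.sum_Ico_sub v hnm)

theorem monotone_of_dist_succ_le (h : ∀ k, dist (x k) (x (k + 1)) ≤ v (k + 1) - v k) :
    Monotone v :=
  monotone_nat_of_le_succ fun k => sub_nonneg.1 (dist_nonneg.trans (h k))

theorem cauchySeq_of_dist_succ_le (h : ∀ k, dist (x k) (x (k + 1)) ≤ v (k + 1) - v k)
    (hv : Tendsto v atTop (𝓝 L)) : CauchySeq x := by
  refine cauchySeq_of_le_tendsto_0' (fun n => L - v n) (fun n m hnm => ?_) ?_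
  · linarith [dist_le_sub_of_dist_succ_le h hnm, (monotone_of_dist_succ_le h).ge_of_tendsto hv m]
  · simpa using (tendsto_const_nhds (x := L)).sub hv

theorem dist_le_sub_of_dist_succ_le_of_tendsto
    (h : ∀ k, dist (x k) (x (k + 1)) ≤ v (k + 1) - v k) (hv : Tendsto v atTop (𝓝 L))
    {a : α} (hx : Tendsto x atTop (𝓝 a)) (n : ℕ) : dist (x n) a ≤ L - v n :=
  le_of_tendsto_of_tendsto (tendsto_const_nhds.dist hx) (hv.sub tendsto_const_nhds)
    ((eventually_ge_atTop n).mono fun _ => dist_le_sub_of_dist_succ_le h)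

end DistSuccLe

theorem stmt_2_general {X : Type*} [NormedAddCommGroup X] [NormedSpace ℝ X] [CompleteSpace X]
    (T : X → X) (x0 : X) (r : ℝ)
    (φ φ' : ℝ → ℝ)
    (hderiv : ∀ v ∈ Icc (0:ℝ) r, HasDerivAt φ (φ' v) v)
    (hφ'cont : ContinuousOn φ' (Icc 0 r))
    (hφ'nonneg : ∀ v ∈ Icc (0:ℝ) r, 0 ≤ φ' v)
    (hlip : ∀ v ∈ Icc (0:ℝ) r, ∀ x ∈ closedBall x0 v, ∀ y ∈ closedBall x0 v,
      ‖T x - T y‖ ≤ φ' v * ‖x - y‖)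
    (hη : ‖T x0 - x0‖ ≤ φ 0)
    (vstar : ℝ) (hvstar : vstar ∈ Icc 0 r) (hfix : φ vstar = vstar)
    (hmin : ∀ w ∈ Icc 0 r, φ w = w → vstar ≤ w)
    (v : ℕ → ℝ) (hv0 : v 0 = 0) (hvrec : ∀ k, v (k + 1) = φ (v k))
    (x : ℕ → X) (hx0 : x 0 = x0) (hxrec : ∀ k, x (k + 1) = T (x k)) :
    (∀ k, x k ∈ closedBall x0 vstar) ∧
    (∀ k, ‖x (k + 1) - x k‖ ≤ v (k + 1) - v k) ∧
    ∃ xstar ∈ closedBall x0 vstar, T xstar = xstar ∧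
      Tendsto x atTop (nhds xstar) ∧ ∀ k, ‖xstar - x k‖ ≤ vstar - v k := by
  have hφc : ContinuousOn φ (Icc 0 r) := HasDerivAt.continuousOn hderiv
  have hφ : MonotoneOn φ (Icc 0 r) := monotoneOn_of_hasDerivWithinAt_nonneg (convex_Icc 0 r) hφc
    (fun w hw => (hderiv w (interior_subset hw)).hasDerivWithinAt)
    (fun w hw => hφ'nonneg w (interior_subset hw))
  have hφ0 : 0 ≤ φ 0 := (norm_nonneg _).trans hη
  have hvI := majorizing_mem_Icc hφ hφ0 hvstar hfix hv0 hvrec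
  have hvr : ∀ k, v k ∈ Icc 0 r := fun k => ⟨(hvI k).1, (hvI k).2.trans hvstar.2⟩
  have hvmono := majorizing_monotone hφ hφ0 hvr hv0 hvrec
  have hvlim := tendsto_majorizing hφc hvstar hmin hvI hvmono hvrec
  have hxv := dist_iterate_le_majorizing hderiv hφ'cont hφ'nonneg hlip hη hvr hvmono hv0 hvrec
    hx0 hxrec
  have hstep : ∀ k, dist (x k) (x (k + 1)) ≤ v (k + 1) - v k := fun k => (hxv k).2
  have hball : ∀ k, x k ∈ closedBall x0 vstar := fun k => (hxv k).1.trans (hvI k).2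
  obtain ⟨xstar, hxlim⟩ := cauchySeq_tendsto_of_complete (cauchySeq_of_dist_succ_le hstep hvlim)
  have hxstar := dist_le_sub_of_dist_succ_le_of_tendsto hstep hvlim hxlim
  have hxstar_ball : xstar ∈ closedBall x0 vstar := by
    simpa [mem_closedBall, hx0, hv0, dist_comm] using hxstar 0
  have hTx : Tendsto (fun k => T (x k)) atTop (𝓝 (T xstar)) :=
    (continuousOn_closedBall_of_majorant hφ'nonneg hlip hvstar xstar hxstar_ball).tendsto.comp
      (tendsto_nhdsWithin_iff.2 ⟨hxlim, Eventually.of_forall hball⟩)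
  refine ⟨hball, fun k => by rw [← dist_eq_norm, dist_comm]; exact hstep k, xstar, hxstar_ball,
    tendsto_nhds_unique hTx ?_, hxlim, fun k => by rw [← dist_eq_norm, dist_comm]; exact hxstar k⟩
  simpa only [Function.comp_def, ← hxrec] using hxlim.comp (tendsto_add_atTop_nat 1)

theorem stmt_2 {X : Type*} [NormedAddCommGroup X] [NormedSpace ℝ X] [CompleteSpace X]
    (T : X → X) (x0 : X) (r : ℝ) (hr : 0 < r)
    (φ φ' : ℝ → ℝ)
    (hderiv : ∀ v ∈ Icc (0:ℝ) r, HasDerivAt φ (φ' v) v)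
    (hφ'cont : ContinuousOn φ' (Icc 0 r))
    (hφ'nonneg : ∀ v ∈ Icc (0:ℝ) r, 0 ≤ φ' v)
    (hφ'mono : MonotoneOn φ' (Icc 0 r))
    (hlip : ∀ v ∈ Icc (0:ℝ) r, ∀ x ∈ closedBall x0 v, ∀ y ∈ closedBall x0 v,
      ‖T x - T y‖ ≤ φ' v * ‖x - y‖)
    (hη : ‖T x0 - x0‖ ≤ φ 0)
    (vstar : ℝ) (hvstar : vstar ∈ Icc 0 r) (hfix : φ vstar = vstar)
    (hmin : ∀ w ∈ Icc 0 r, φ w = w → vstar ≤ w)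
    (v : ℕ → ℝ) (hv0 : v 0 = 0) (hvrec : ∀ k, v (k + 1) = φ (v k))
    (x : ℕ → X) (hx0 : x 0 = x0) (hxrec : ∀ k, x (k + 1) = T (x k)) :
    (∀ k, x k ∈ closedBall x0 vstar) ∧
    (∀ k, ‖x (k + 1) - x k‖ ≤ v (k + 1) - v k) ∧
    ∃ xstar ∈ closedBall x0 vstar, T xstar = xstar ∧
      Tendsto x atTop (nhds xstar) ∧ ∀ k, ‖xstar - x k‖ ≤ vstar - v k :=
  stmt_2_general T x0 r φ φ' hderiv hφ'cont hφ'nonneg hlip hη vstar hvstar hfix hmin v hv0 hvrec x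
    hx0 hxrec
end

section
/- Let g(v) = l₀ v^{α+1}/(1+α) - (1-ν)v + η with l₀ > 0, η > 0, α ∈ (0,1], ν ∈ [0,1). If l₀ η^α ≤ (1-ν)^{α+1}(α/(1+α))^α, then g has a minimal root v_* in (0, r̄_*] where r̄_* = ((1-ν)/l₀)^{1/α}, and a maximal root v_{**} ≥ v_* in [r̄_*, ∞); these coincide exactly when equality holds in the condition. -/
/-!
With `c = 1 - ν`, the derivative `l v^α - c` of `g` is negative below `r̄ = (c/l)^(1/α)` and
positive above it, so `g` strictly decreases on `[0, r̄]` and strictly increases on `[r̄, ∞)`,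
with `g 0 = η > 0` and `g v → ∞`. Its minimum is `g r̄ = η - K` with `K = c r̄ α/(1+α)`, and
`l K^α = c^(α+1) (α/(1+α))^α`, so the hypothesis says exactly `g r̄ ≤ 0`, and equality in it
says `g r̄ = 0`. The intermediate value theorem then gives one root on each side of `r̄`, unique
there by strict monotonicity, and the two roots coincide iff `g r̄ = 0`.
-/

open Set Real Filter

theorem exists_extreme_roots_of_valley {g : ℝ → ℝ} {r : ℝ} (hr0 : 0 ≤ r) (hcont : ContinuousOn g (Ici 0))
    (hanti : StrictAntiOn g (Icc 0 r)) (hmono : StrictMonoOn g (Ici r))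
    (h0 : 0 < g 0) (hr : g r ≤ 0) (hatTop : ∀ᶠ v in atTop, 0 ≤ g v) :
    ∃ a ∈ Ioc 0 r, ∃ b ∈ Ici r, g a = 0 ∧ g b = 0 ∧
      (∀ v, 0 ≤ v → g v = 0 → a ≤ v) ∧ (∀ v, 0 ≤ v → g v = 0 → v ≤ b) ∧
      a ≤ b ∧ (a = b ↔ g r = 0) := by
  obtain ⟨a, ha, hga⟩ : ∃ a ∈ Icc 0 r, g a = 0 :=
    intermediate_value_Icc' hr0 (hcont.mono Icc_subset_Ici_self) ⟨hr, h0.le⟩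
  have ha0 : 0 < a := ha.1.lt_of_ne (by rintro rfl; exact h0.ne' hga)
  obtain ⟨M, hgM, hrM⟩ := (hatTop.and (eventually_ge_atTop r)).exists
  obtain ⟨b, hb, hgb⟩ : ∃ b ∈ Icc r M, g b = 0 :=
    intermediate_value_Icc hrM (hcont.mono fun x hx ↦ hr0.trans hx.1) ⟨hr, hgM⟩
  have hab : a ≤ b := ha.2.trans hb.1
  refine ⟨a, ⟨ha0, ha.2⟩, b, hb.1, hga, hgb, fun v hv hgv ↦ ?_, fun v hv hgv ↦ ?_, hab, ?_⟩
  · rcases le_or_gt v r with hvr | hvr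
    · exact (hanti.injOn ⟨hv, hvr⟩ ha (hgv.trans hga.symm)).ge
    · exact ha.2.trans hvr.le
  · rcases le_or_gt r v with hvr | hvr
    · exact (hmono.injOn hvr hb.1 (hgv.trans hgb.symm)).le
    · exact hvr.le.trans hb.1
  constructor
  · intro h
    rwa [← le_antisymm ha.2 (h ▸ hb.1)]
  · intro hgr
    rw [hanti.injOn ha ⟨hr0, le_rfl⟩ (hga.trans hgr.symm),
      hmono.injOn hb.1 self_mem_Ici (hgb.trans hgr.symm)]

noncomputable def majorant (l c η α v : ℝ) : ℝ :=
  l * v ^ (α + 1) / (1 + α) - c * v + η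

section Majorant

variable {l c η α : ℝ}

theorem hasDerivAt_majorant (hα : 0 ≤ α) (x : ℝ) :
    HasDerivAt (majorant l c η α) (l * x ^ α - c) x := by
  show HasDerivAt (fun v ↦ l * v ^ (α + 1) / (1 + α) - c * v + η) _ x
  have hpow : HasDerivAt (fun v : ℝ ↦ v ^ (α + 1)) ((α + 1) * x ^ α) x := by
    simpa using hasDerivAt_rpow_const (p := α + 1) (x := x) (Or.inr (by linarith))
  refine ((((hpow.const_mul l).div_const (1 + α)).sub
    ((hasDerivAt_id x).const_mul c)).add_const η).congr_deriv ?_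
  field_simp
  ring

theorem continuous_majorant (hα : 0 ≤ α) : Continuous (majorant l c η α) :=
  continuous_iff_continuousAt.2 fun x ↦ (hasDerivAt_majorant hα x).differentiableAt.continuousAt

theorem majorant_zero (hα : 0 ≤ α) : majorant l c η α 0 = η := by
  simp [majorant, zero_rpow (by linarith : α + 1 ≠ 0)]

theorem majorant_eventually_nonneg (hl : 0 < l) (hc : 0 ≤ c) (hα : 0 < α) (hη : 0 ≤ η) :
    ∀ᶠ v in atTop, 0 ≤ majorant l c η α v := by
  filter_upwards [eventually_ge_atTop (((1 + α) * c / l) ^ α⁻¹)] with v hv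
  have hv0 : 0 ≤ v := (rpow_nonneg (by positivity) _).trans hv
  have hvα : (1 + α) * c ≤ l * v ^ α := by
    rw [rpow_inv_le_iff_of_pos (by positivity) hv0 hα, div_le_iff₀ hl] at hv
    linarith
  have : c * v ≤ l * v ^ (α + 1) / (1 + α) := by
    rw [rpow_add_one' hv0 (by linarith), le_div_iff₀ (by linarith), ← mul_assoc]
    nlinarith
  unfold majorant
  linarith

theorem strictAntiOn_majorant (hl : 0 < l) (hc : 0 ≤ c) (hα : 0 < α) :
    StrictAntiOn (majorant l c η α) (Icc 0 ((c / l) ^ (1 / α))) := by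
  refine strictAntiOn_of_deriv_neg (convex_Icc _ _) (continuous_majorant hα.le).continuousOn
    fun x hx ↦ ?_
  rw [interior_Icc, one_div] at hx
  rw [(hasDerivAt_majorant hα.le x).deriv, sub_neg, ← lt_div_iff₀' hl]
  exact (lt_rpow_inv_iff_of_pos hx.1.le (by positivity) hα).1 hx.2

theorem strictMonoOn_majorant (hl : 0 < l) (hc : 0 ≤ c) (hα : 0 < α) :
    StrictMonoOn (majorant l c η α) (Ici ((c / l) ^ (1 / α))) := by
  refine strictMonoOn_of_deriv_pos (convex_Ici _) (continuous_majorant hα.le).continuousOn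
    fun x hx ↦ ?_
  rw [interior_Ici, mem_Ioi, one_div] at hx
  have hx0 : 0 ≤ x := (rpow_nonneg (by positivity) _).trans hx.le
  rw [(hasDerivAt_majorant hα.le x).deriv, sub_pos, ← div_lt_iff₀' hl]
  exact (rpow_inv_lt_iff_of_pos (by positivity) hx0 hα).1 hx

theorem majorant_critical (hl : 0 < l) (hc : 0 ≤ c) (hα : 0 < α) :
    majorant l c η α ((c / l) ^ (1 / α)) = η - c * (c / l) ^ (1 / α) * (α / (1 + α)) := by
  set r := (c / l) ^ (1 / α) with hr_def
  have hr : r ^ (α + 1) = c / l * r := by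
    rw [rpow_add_one' (by positivity) (by linarith), hr_def, one_div,
      rpow_inv_rpow (by positivity) hα.ne']
  rw [majorant, hr]
  field_simp
  ring

theorem mul_rpow_critical (hl : 0 < l) (hc : 0 ≤ c) (hα : 0 < α) :
    l * (c * (c / l) ^ (1 / α) * (α / (1 + α))) ^ α = c ^ (α + 1) * (α / (1 + α)) ^ α := by
  rw [mul_rpow (by positivity) (by positivity), mul_rpow hc (by positivity), one_div,
    rpow_inv_rpow (by positivity) hα.ne', rpow_add_one' hc (by linarith)]
  field_simp

theorem majorant_critical_nonpos_iff (hl : 0 < l) (hc : 0 ≤ c) (hα : 0 < α) (hη : 0 ≤ η) :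
    majorant l c η α ((c / l) ^ (1 / α)) ≤ 0 ↔
      l * η ^ α ≤ c ^ (α + 1) * (α / (1 + α)) ^ α := by
  rw [majorant_critical hl hc hα, sub_nonpos, ← mul_rpow_critical hl hc hα,
    mul_le_mul_iff_right₀ hl, rpow_le_rpow_iff hη (by positivity) hα]

theorem majorant_critical_eq_zero_iff (hl : 0 < l) (hc : 0 ≤ c) (hα : 0 < α) (hη : 0 ≤ η) :
    majorant l c η α ((c / l) ^ (1 / α)) = 0 ↔
      l * η ^ α = c ^ (α + 1) * (α / (1 + α)) ^ α := by
  rw [majorant_critical hl hc hα, sub_eq_zero, ← mul_rpow_critical hl hc hα,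
    mul_right_inj' hl.ne', rpow_left_inj hη (by positivity) hα.ne']

end Majorant

theorem stmt_5_general (l0 η α ν : ℝ) (hl0 : 0 < l0) (hη : 0 < η)
    (hα : α ∈ Ioc (0:ℝ) 1) (hν1 : ν < 1)
    (g : ℝ → ℝ) (hg : ∀ v, g v = l0 * v ^ (α + 1) / (1 + α) - (1 - ν) * v + η)
    (rbar : ℝ) (hrbar : rbar = ((1 - ν) / l0) ^ (1 / α))
    (hcond : l0 * η ^ α ≤ (1 - ν) ^ (α + 1) * (α / (1 + α)) ^ α) :
    ∃ vstar ∈ Ioc 0 rbar, ∃ vss ∈ Ici rbar,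
      g vstar = 0 ∧ g vss = 0 ∧
      (∀ v, 0 ≤ v → g v = 0 → vstar ≤ v) ∧
      (∀ v, 0 ≤ v → g v = 0 → v ≤ vss) ∧
      vstar ≤ vss ∧
      (vstar = vss ↔ l0 * η ^ α = (1 - ν) ^ (α + 1) * (α / (1 + α)) ^ α) := by
  have hc : 0 ≤ 1 - ν := by linarith
  obtain rfl : g = majorant l0 (1 - ν) η α := funext hg
  subst hrbar
  rw [← majorant_critical_eq_zero_iff hl0 hc hα.1 hη.le]
  exact exists_extreme_roots_of_valley (by positivity) (continuous_majorant hα.1.le).continuousOn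
    (strictAntiOn_majorant hl0 hc hα.1) (strictMonoOn_majorant hl0 hc hα.1)
    (by rwa [majorant_zero hα.1.le])
    ((majorant_critical_nonpos_iff hl0 hc hα.1 hη.le).2 hcond)
    (majorant_eventually_nonneg hl0 hc hα.1 hη.le)

theorem stmt_5 (l0 η α ν : ℝ) (hl0 : 0 < l0) (hη : 0 < η)
    (hα : α ∈ Ioc (0:ℝ) 1) (hν0 : 0 ≤ ν) (hν1 : ν < 1)
    (g : ℝ → ℝ) (hg : ∀ v, g v = l0 * v ^ (α + 1) / (1 + α) - (1 - ν) * v + η)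
    (rbar : ℝ) (hrbar : rbar = ((1 - ν) / l0) ^ (1 / α))
    (hcond : l0 * η ^ α ≤ (1 - ν) ^ (α + 1) * (α / (1 + α)) ^ α) :
    ∃ vstar ∈ Ioc 0 rbar, ∃ vss ∈ Ici rbar,
      g vstar = 0 ∧ g vss = 0 ∧
      (∀ v, 0 ≤ v → g v = 0 → vstar ≤ v) ∧
      (∀ v, 0 ≤ v → g v = 0 → v ≤ vss) ∧
      vstar ≤ vss ∧
      (vstar = vss ↔ l0 * η ^ α = (1 - ν) ^ (α + 1) * (α / (1 + α)) ^ α) :=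
  stmt_5_general l0 η α ν hl0 hη hα hν1 g hg rbar hrbar hcond
end

section
/- Let φ(v) = η + ν·v + ∫₀^v (ω_B(l) - ν) dl where ω_B : [0,R] → ℝ is continuous, non-decreasing, non-negative with ω_B(0) = ν < 1 and η > 0. Define γ_* = sup{γ ∈ (0,R] : ω_B(γ) < 1}. If φ(γ_*) ≤ γ_*, then the equation v = φ(v) has a minimal solution v_* in [0,R] with v_* ≤ γ_*. -/
/-!
Since `φ 0 = η > 0` and `φ γ_* ≤ γ_*`, the intermediate value theorem gives a fixed point of the
continuous map `φ` in `[0, γ_*]`. The fixed points of `φ` in `[0, R]` form a closed, hence compact,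
nonempty set, and its least element is the minimal solution.
-/

open Set Real intervalIntegral

theorem exists_isLeast_fixedPoint_Icc {α : Type*} [ConditionallyCompleteLinearOrder α]
    [TopologicalSpace α] [OrderTopology α] [DenselyOrdered α] {f : α → α} {a b c : α}
    (hf : ContinuousOn f (Icc a b)) (ha : a ≤ f a) (hc : c ∈ Icc a b) (hfc : f c ≤ c) :
    ∃ v, IsLeast {x ∈ Icc a b | f x = x} v ∧ v ≤ c := by
  have hac : Icc a c ⊆ Icc a b := Icc_subset_Icc_right hc.2
  obtain ⟨x, hx, hxfx⟩ := isPreconnected_Icc.intermediate_value₂ (left_mem_Icc.2 hc.1)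
    (right_mem_Icc.2 hc.1) continuousOn_id (hf.mono hac) ha hfc
  have hfix_closed : IsClosed {x ∈ Icc a b | f x = x} :=
    isClosed_Icc.isClosed_eq hf continuousOn_id
  obtain ⟨v, hv⟩ := (isCompact_Icc.of_isClosed_subset hfix_closed fun _ hx ↦ hx.1).exists_isLeast
    ⟨x, hac hx, hxfx.symm⟩
  exact ⟨v, hv, (hv.2 ⟨hac hx, hxfx.symm⟩).trans hx.2⟩

theorem continuousOn_const_add_primitive {f : ℝ → ℝ} {R : ℝ} (hR : 0 ≤ R)
    (hf : ContinuousOn f (Icc 0 R)) (η : ℝ) :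
    ContinuousOn (fun v ↦ η + ∫ l in (0:ℝ)..v, f l) (Icc 0 R) := by
  rw [← uIcc_of_le hR] at hf ⊢
  exact continuousOn_const.add <|
    continuousOn_primitive_interval (hf.integrableOn_compact isCompact_uIcc)

theorem stmt_9_general (R η : ℝ) (hR : 0 < R) (hη : 0 < η)
    (ωB : ℝ → ℝ) (hcont : ContinuousOn ωB (Icc 0 R))
    (φ : ℝ → ℝ) (hφ : ∀ v, φ v = η + ∫ l in (0:ℝ)..v, ωB l)
    (γstar : ℝ) (hγ : γstar = sSup {γ | γ ∈ Ioc (0:ℝ) R ∧ ωB γ < 1})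
    (hcond : φ γstar ≤ γstar) :
    ∃ vstar ∈ Icc (0:ℝ) R, φ vstar = vstar ∧ vstar ≤ γstar ∧
      ∀ w ∈ Icc (0:ℝ) R, φ w = w → vstar ≤ w := by
  obtain rfl : φ = fun v ↦ η + ∫ l in (0:ℝ)..v, ωB l := funext hφ
  -- `sSup ∅ = 0` in `ℝ`, so this holds even without knowing that the set is nonempty.
  have hγstar : γstar ∈ Icc 0 R := hγ ▸
    ⟨Real.sSup_nonneg fun x hx ↦ hx.1.1.le, Real.sSup_le (fun x hx ↦ hx.1.2) hR.le⟩
  have hφ0 : 0 ≤ η + ∫ l in (0:ℝ)..0, ωB l := by simpa using hη.le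
  obtain ⟨v, hv, hvγ⟩ := exists_isLeast_fixedPoint_Icc
    (continuousOn_const_add_primitive hR.le hcont η) hφ0 hγstar hcond
  exact ⟨v, hv.1.1, hv.1.2, hvγ, fun w hw hfw ↦ hv.2 ⟨hw, hfw⟩⟩

theorem stmt_9 (R η ν : ℝ) (hR : 0 < R) (hη : 0 < η) (hν0 : 0 ≤ ν) (hν1 : ν < 1)
    (ωB : ℝ → ℝ) (hcont : ContinuousOn ωB (Icc 0 R)) (hmono : MonotoneOn ωB (Icc 0 R))
    (hnonneg : ∀ v ∈ Icc (0:ℝ) R, 0 ≤ ωB v) (hω0 : ωB 0 = ν)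
    (φ : ℝ → ℝ) (hφ : ∀ v, φ v = η + ∫ l in (0:ℝ)..v, ωB l)
    (γstar : ℝ) (hγ : γstar = sSup {γ | γ ∈ Ioc (0:ℝ) R ∧ ωB γ < 1})
    (hcond : φ γstar ≤ γstar) :
    ∃ vstar ∈ Icc (0:ℝ) R, φ vstar = vstar ∧ vstar ≤ γstar ∧
      ∀ w ∈ Icc (0:ℝ) R, φ w = w → vstar ≤ w :=
  stmt_9_general R η hR hη ωB hcont φ hφ γstar hγ hcond
end

section
/- Conversely, with φ as above, if the equation v = φ(v) has a solution in [0,R], then φ(γ_*) ≤ γ_*, where γ_* = sup{γ ∈ (0,R] : ω_B(γ) < 1}. Hence φ(γ_*) ≤ γ_* is a necessary and sufficient condition for existence of a minimal solution of v = φ(v) in [0,R]. -/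
open Set Real intervalIntegral MeasureTheory

/-
Write `F v = ∫₀^v ω_B` and `γ_* = sup {γ ∈ (0, R] : ω_B γ < 1}`. By monotonicity `ω_B < 1` on
`[0, γ_*)` and `ω_B ≥ 1` on `(γ_*, R]`, so `F v - v` decreases up to `γ_*` and increases after
it: `γ_*` minimises `φ v - v` on `[0, R]`. Hence any fixed point forces `φ γ_* ≤ γ_*`.
Conversely, `φ 0 - 0 = η > 0` and the intermediate value theorem give a fixed point in
`[0, γ_*]`, and the fixed points of the continuous map `φ` form a compact set, which has a least
element.
-/

theorem intervalIntegral_le_sub_of_le_one {f : ℝ → ℝ} {a b : ℝ} (hab : a ≤ b)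
    (hf : IntervalIntegrable f volume a b) (h : ∀ x ∈ Ioo a b, f x ≤ 1) :
    ∫ x in a..b, f x ≤ b - a := by
  simpa only [integral_one] using
    integral_mono_on_of_le_Ioo hab hf intervalIntegrable_const h

theorem sub_le_intervalIntegral_of_one_le {f : ℝ → ℝ} {a b : ℝ} (hab : a ≤ b)
    (hf : IntervalIntegrable f volume a b) (h : ∀ x ∈ Ioo a b, 1 ≤ f x) :
    b - a ≤ ∫ x in a..b, f x := by
  simpa only [integral_one] using
    integral_mono_on_of_le_Ioo hab intervalIntegrable_const hf h

theorem exists_isLeast_fixedPoint_Icc_s10 {g : ℝ → ℝ} {a b : ℝ} (hg : ContinuousOn g (Icc a b))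
    (h : ∃ x ∈ Icc a b, g x = x) : ∃ x, IsLeast {x ∈ Icc a b | g x = x} x := by
  obtain ⟨x, hx, hfix⟩ := h
  have hclosed : IsClosed (Icc a b ∩ (fun x => g x - x) ⁻¹' {0}) :=
    (hg.sub continuousOn_id).preimage_isClosed_of_isClosed isClosed_Icc isClosed_singleton
  have hcompact : IsCompact {x ∈ Icc a b | g x = x} := by
    convert isCompact_Icc.of_isClosed_subset hclosed inter_subset_left using 1
    ext y
    simp [sub_eq_zero]
  exact hcompact.exists_isLeast ⟨x, hx, hfix⟩

section SlopeThreshold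

variable {ω : ℝ → ℝ} {R : ℝ}

theorem sSup_slope_lt_one_mem_Icc (hR : 0 ≤ R) :
    sSup {γ | γ ∈ Ioc (0:ℝ) R ∧ ω γ < 1} ∈ Icc 0 R :=
  ⟨Real.sSup_nonneg fun _ hγ => hγ.1.1.le, Real.sSup_le (fun _ hγ => hγ.1.2) hR⟩

theorem lt_one_of_lt_sSup_slope_lt_one (hmono : MonotoneOn ω (Icc 0 R)) {x : ℝ} (hx : 0 ≤ x)
    (hxγ : x < sSup {γ | γ ∈ Ioc (0:ℝ) R ∧ ω γ < 1}) : ω x < 1 := by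
  rcases eq_empty_or_nonempty {γ | γ ∈ Ioc (0:ℝ) R ∧ ω γ < 1} with hS | hS
  · rw [hS, Real.sSup_empty] at hxγ
    exact absurd hx hxγ.not_ge
  obtain ⟨γ, ⟨⟨hγ0, hγR⟩, hωγ⟩, hxγ⟩ := exists_lt_of_lt_csSup hS hxγ
  exact (hmono ⟨hx, hxγ.le.trans hγR⟩ ⟨hγ0.le, hγR⟩ hxγ.le).trans_lt hωγ

theorem one_le_of_sSup_slope_lt_one_lt {x : ℝ}
    (hγx : sSup {γ | γ ∈ Ioc (0:ℝ) R ∧ ω γ < 1} < x) (hxR : x ≤ R) : 1 ≤ ω x := by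
  by_contra! hωx
  have hx : 0 < x := (Real.sSup_nonneg fun _ hγ => hγ.1.1.le).trans_lt hγx
  have hbdd : BddAbove {γ | γ ∈ Ioc (0:ℝ) R ∧ ω γ < 1} := ⟨R, fun _ hγ => hγ.1.2⟩
  exact (le_csSup hbdd ⟨⟨hx, hxR⟩, hωx⟩).not_gt hγx

theorem isMinOn_primitive_sub_sSup_slope_lt_one (hR : 0 ≤ R)
    (hcont : ContinuousOn ω (Icc 0 R)) (hmono : MonotoneOn ω (Icc 0 R)) :
    IsMinOn (fun v => (∫ l in (0:ℝ)..v, ω l) - v) (Icc 0 R)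
      (sSup {γ | γ ∈ Ioc (0:ℝ) R ∧ ω γ < 1}) := by
  set γ := sSup {γ | γ ∈ Ioc (0:ℝ) R ∧ ω γ < 1}
  have hγ : γ ∈ Icc 0 R := sSup_slope_lt_one_mem_Icc hR
  have hint : ∀ a ∈ Icc 0 R, ∀ b ∈ Icc 0 R, IntervalIntegrable ω volume a b :=
    fun a ha b hb => (hcont.mono (uIcc_subset_Icc ha hb)).intervalIntegrable
  have h0 : (0:ℝ) ∈ Icc 0 R := ⟨le_rfl, hR⟩
  refine isMinOn_iff.mpr fun v hv => ?_
  rcases le_total v γ with hvγ | hγv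
  · have hbound : ∫ l in v..γ, ω l ≤ γ - v :=
      intervalIntegral_le_sub_of_le_one hvγ (hint v hv γ hγ) fun x hx =>
        (lt_one_of_lt_sSup_slope_lt_one hmono (hv.1.trans hx.1.le) hx.2).le
    have hsplit := integral_interval_sub_left (hint 0 h0 γ hγ) (hint 0 h0 v hv)
    linarith
  · have hbound : v - γ ≤ ∫ l in γ..v, ω l :=
      sub_le_intervalIntegral_of_one_le hγv (hint γ hγ v hv) fun x hx =>
        one_le_of_sSup_slope_lt_one_lt hx.1 (hx.2.le.trans hv.2)
    have hsplit := integral_interval_sub_left (hint 0 h0 v hv) (hint 0 h0 γ hγ)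
    linarith

end SlopeThreshold

theorem stmt_10_general (R η : ℝ) (hR : 0 < R) (hη : 0 < η)
    (ωB : ℝ → ℝ) (hcont : ContinuousOn ωB (Icc 0 R)) (hmono : MonotoneOn ωB (Icc 0 R))
    (φ : ℝ → ℝ) (hφ : ∀ v, φ v = η + ∫ l in (0:ℝ)..v, ωB l)
    (γstar : ℝ) (hγ : γstar = sSup {γ | γ ∈ Ioc (0:ℝ) R ∧ ωB γ < 1}) :
    ((∃ v ∈ Icc (0:ℝ) R, φ v = v) → φ γstar ≤ γstar) ∧
    (φ γstar ≤ γstar ↔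
      ∃ vstar ∈ Icc (0:ℝ) R, φ vstar = vstar ∧
        ∀ w ∈ Icc (0:ℝ) R, φ w = w → vstar ≤ w) := by
  have hγmem : γstar ∈ Icc 0 R := hγ ▸ sSup_slope_lt_one_mem_Icc hR.le
  have hmin := hγ ▸ isMinOn_primitive_sub_sSup_slope_lt_one hR.le hcont hmono
  have hφcont : ContinuousOn φ (Icc 0 R) := by
    have hprim := continuousOn_primitive_interval (a := 0) (b := R) (μ := volume)
      (by rw [uIcc_of_le hR.le]; exact hcont.integrableOn_compact isCompact_Icc)
    rw [uIcc_of_le hR.le] at hprim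
    exact (continuousOn_const.add hprim).congr fun v _ => hφ v
  have necessary : (∃ v ∈ Icc (0:ℝ) R, φ v = v) → φ γstar ≤ γstar := by
    rintro ⟨v, hv, hfix⟩
    have hle := isMinOn_iff.mp hmin v hv
    rw [hφ] at hfix ⊢
    linarith
  refine ⟨necessary, fun hle => ?_, fun ⟨v, hv, hfix, _⟩ => necessary ⟨v, hv, hfix⟩⟩
  obtain ⟨c, hc, hcfix⟩ := exists_mem_Icc_isFixedPt
    (hφcont.mono (Icc_subset_Icc le_rfl hγmem.2)) hγmem.1 (by rw [hφ, integral_same]; linarith) hle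
  obtain ⟨v, ⟨hv, hvfix⟩, hleast⟩ :=
    exists_isLeast_fixedPoint_Icc_s10 hφcont ⟨c, ⟨hc.1, hc.2.trans hγmem.2⟩, hcfix⟩
  exact ⟨v, hv, hvfix, fun w hw hwfix => hleast ⟨hw, hwfix⟩⟩

theorem stmt_10 (R η ν : ℝ) (hR : 0 < R) (hη : 0 < η) (hν0 : 0 ≤ ν) (hν1 : ν < 1)
    (ωB : ℝ → ℝ) (hcont : ContinuousOn ωB (Icc 0 R)) (hmono : MonotoneOn ωB (Icc 0 R))
    (hnonneg : ∀ v ∈ Icc (0:ℝ) R, 0 ≤ ωB v) (hω0 : ωB 0 = ν)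
    (φ : ℝ → ℝ) (hφ : ∀ v, φ v = η + ∫ l in (0:ℝ)..v, ωB l)
    (γstar : ℝ) (hγ : γstar = sSup {γ | γ ∈ Ioc (0:ℝ) R ∧ ωB γ < 1}) :
    ((∃ v ∈ Icc (0:ℝ) R, φ v = v) → φ γstar ≤ γstar) ∧
    (φ γstar ≤ γstar ↔
      ∃ vstar ∈ Icc (0:ℝ) R, φ vstar = vstar ∧
        ∀ w ∈ Icc (0:ℝ) R, φ w = w → vstar ≤ w) :=
  stmt_10_general R η hR hη ωB hcont hmono φ hφ γstar hγ
end

section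
/- In the setting of the FSI theorem with Hölder continuous derivative (ω_B(v) = l₀ v^α + ν, α ∈ (0,1], ν ∈ [0,1)), if l₀ η^α ≤ (1-ν)^{α+1}(α/(1+α))^α and R ≥ v_*, then the fixed slope iteration converges to a solution x_* of F(x)=0 with ‖x_* - x_0‖ ≤ v_*, where v_* is the minimal positive root of g(v) = (1+α)^{-1} l₀ v^{α+1} - (1-ν)v + η. -/
open Set Filter Metric Function Topology

/-!
The fixed slope iteration is the Picard iteration of `Φ x = x - B (F x)`, whose derivative
`I - B F'(x)` is bounded by `ω(‖x - x₀‖)` with `ω v = l₀ v^α + ν`. Writing `G` for the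
primitive of `ω` with `G 0 = 0`, the majorant is `g v = G v - v + η`, and the mean value
inequality along the segment `[x_k, x_{k+1}]` gives `‖x_{k+2} - x_{k+1}‖ ≤ G (t_{k+1}) - G (t_k)
= g (t_{k+1})` for the scalar sequence `t_{k+1} = t_k + g (t_k)`, `t_0 = 0`. Since `g ≥ 0` up to
its minimal positive root `v_*` and `u ↦ u + g u` is nondecreasing, `t_k` stays in `[0, v_*]`
and `∑ g (t_k) ≤ v_*`; so `(x_k)` has summable steps, converges to a fixed point of `Φ`, and
stays within `v_*` of `x₀`.
-/

theorem nonneg_of_mem_Icc_of_minimal_root {g : ℝ → ℝ} {v : ℝ} (hg : ContinuousOn g (Icc 0 v))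
    (hg0 : 0 < g 0) (hgv : g v = 0) (hmin : ∀ w, 0 < w → g w = 0 → v ≤ w) :
    ∀ u ∈ Icc 0 v, 0 ≤ g u := by
  rintro u ⟨hu0, huv⟩
  by_contra! hneg
  have hlt : u < v := huv.lt_of_ne (by rintro rfl; linarith)
  obtain ⟨w, ⟨hw0, hwu⟩, hw⟩ : ∃ w ∈ Icc 0 u, g w = 0 :=
    intermediate_value_Icc' hu0 (hg.mono (Icc_subset_Icc_right huv)) ⟨hneg.le, hg0.le⟩
  have hw_pos : 0 < w := hw0.lt_of_ne (by rintro rfl; linarith)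
  linarith [hmin w hw_pos hw]

def majorantSeq (g : ℝ → ℝ) (k : ℕ) : ℝ := (fun u => u + g u)^[k] 0

namespace majorantSeq

variable {g : ℝ → ℝ}

@[simp]
theorem zero : majorantSeq g 0 = 0 := rfl

theorem succ (k : ℕ) : majorantSeq g (k + 1) = majorantSeq g k + g (majorantSeq g k) :=
  iterate_succ_apply' _ _ _

theorem sum_range (n : ℕ) : ∑ k ∈ Finset.range n, g (majorantSeq g k) = majorantSeq g n := by
  simpa [succ] using Finset.sum_range_sub (majorantSeq g) n

theorem mem_Icc {v : ℝ} (hv : 0 ≤ v) (hg : ∀ u ∈ Icc 0 v, 0 ≤ g u) (hgv : g v = 0)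
    (hmono : MonotoneOn (fun u => u + g u) (Icc 0 v)) (k : ℕ) : majorantSeq g k ∈ Icc 0 v := by
  have hmaps : MapsTo (fun u => u + g u) (Icc 0 v) (Icc 0 v) := fun u hu =>
    ⟨by linarith [hu.1, hg u hu], by
      simpa [hgv] using hmono hu (right_mem_Icc.2 hv) hu.2⟩
  exact hmaps.iterate k (left_mem_Icc.2 hv)

end majorantSeq

theorem exists_tendsto_of_dist_le_of_sum_le {X : Type*} [MetricSpace X] [CompleteSpace X]
    {x : ℕ → X} {d : ℕ → ℝ} {c : ℝ} (hd : ∀ k, 0 ≤ d k) (hx : ∀ k, dist (x k) (x (k + 1)) ≤ d k)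
    (hc : ∀ n, ∑ k ∈ Finset.range n, d k ≤ c) :
    ∃ xs, Tendsto x atTop (𝓝 xs) ∧ dist (x 0) xs ≤ c := by
  have hsum : Summable d := summable_of_sum_range_le hd hc
  obtain ⟨xs, hlim⟩ := cauchySeq_tendsto_of_complete (cauchySeq_of_dist_le_of_summable d hx hsum)
  exact ⟨xs, hlim, (dist_le_tsum_of_dist_le_of_tendsto₀ d hx hsum hlim).trans
    (Real.tsum_le_of_sum_range_le hd hc)⟩

section Majorant

variable {X : Type*} [NormedAddCommGroup X] {Φ : X → X} {x : ℕ → X} {g : ℝ → ℝ} {v : ℝ}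

theorem norm_sub_le_majorantSeq (hx : ∀ k, x (k + 1) = Φ (x k))
    (ht : ∀ k, majorantSeq g k ∈ Icc 0 v) (h0 : ‖x 1 - x 0‖ ≤ g 0)
    (hstep : ∀ a ∈ Icc 0 v, ∀ y z, ‖y - x 0‖ ≤ a → ‖z - y‖ ≤ g a →
      ‖Φ z - Φ y‖ ≤ g (a + g a)) (k : ℕ) :
    ‖x k - x 0‖ ≤ majorantSeq g k ∧ ‖x (k + 1) - x k‖ ≤ g (majorantSeq g k) := by
  induction k with
  | zero => simpa using h0
  | succ k ih =>
    obtain ⟨hdist, hinc⟩ := ih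
    refine ⟨?_, ?_⟩
    · calc ‖x (k + 1) - x 0‖ = ‖(x (k + 1) - x k) + (x k - x 0)‖ := by
            rw [sub_add_sub_cancel]
        _ ≤ ‖x (k + 1) - x k‖ + ‖x k - x 0‖ := norm_add_le _ _
        _ ≤ majorantSeq g (k + 1) := by rw [majorantSeq.succ]; linarith
    · rw [majorantSeq.succ, hx (k + 1), hx k]
      exact hstep _ (ht k) _ _ hdist (hx k ▸ hinc)

theorem exists_isFixedPt_of_majorant [CompleteSpace X] (hx : ∀ k, x (k + 1) = Φ (x k))
    (hv : 0 ≤ v) (hg : ∀ u ∈ Icc 0 v, 0 ≤ g u) (hgv : g v = 0)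
    (hmono : MonotoneOn (fun u => u + g u) (Icc 0 v)) (h0 : ‖x 1 - x 0‖ ≤ g 0)
    (hstep : ∀ a ∈ Icc 0 v, ∀ y z, ‖y - x 0‖ ≤ a → ‖z - y‖ ≤ g a →
      ‖Φ z - Φ y‖ ≤ g (a + g a))
    (hΦ : ∀ z ∈ closedBall (x 0) v, ContinuousAt Φ z) :
    ∃ xs, IsFixedPt Φ xs ∧ ‖xs - x 0‖ ≤ v ∧ Tendsto x atTop (𝓝 xs) := by
  have ht := majorantSeq.mem_Icc hv hg hgv hmono
  have hinc := norm_sub_le_majorantSeq hx ht h0 hstep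
  obtain ⟨xs, hlim, hdist⟩ := exists_tendsto_of_dist_le_of_sum_le (x := x) (fun k => hg _ (ht k))
    (fun k => by rw [dist_comm, dist_eq_norm]; exact (hinc k).2)
    (fun n => by rw [majorantSeq.sum_range]; exact (ht n).2)
  have hxs : ‖xs - x 0‖ ≤ v := by rw [← dist_eq_norm, dist_comm]; exact hdist
  have hΦlim : Tendsto (fun k => Φ (x k)) atTop (𝓝 (Φ xs)) :=
    (hΦ xs (mem_closedBall_iff_norm.2 hxs)).tendsto.comp hlim
  have hshift : Tendsto (fun k => Φ (x k)) atTop (𝓝 xs) := by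
    simpa only [hx] using (tendsto_add_atTop_iff_nat 1).2 hlim
  exact ⟨xs, tendsto_nhds_unique hΦlim hshift, hxs, hlim⟩

end Majorant

theorem norm_image_sub_le_of_norm_fderiv_le_majorant {E F : Type*}
    [NormedAddCommGroup E] [NormedSpace ℝ E] [NormedAddCommGroup F] [NormedSpace ℝ F]
    {f : E → F} {f' : E → E →L[ℝ] F} {G ω : ℝ → ℝ} {x₀ x y : E} {a e : ℝ}
    (hf : ∀ z ∈ segment ℝ x y, HasFDerivAt f (f' z) z)
    (hG : ∀ s, HasDerivAt G (ω s) s) (hω : MonotoneOn ω (Ici 0))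
    (hf' : ∀ z ∈ segment ℝ x y, ‖f' z‖ ≤ ω ‖z - x₀‖)
    (hx : ‖x - x₀‖ ≤ a) (hxy : ‖y - x‖ ≤ e) :
    ‖f y - f x‖ ≤ G (a + e) - G a := by
  set p : ℝ → E := fun s => x + s • (y - x)
  have hp : ∀ s ∈ Icc (0 : ℝ) 1, p s ∈ segment ℝ x y := fun s hs => by
    rw [segment_eq_image']; exact mem_image_of_mem _ hs
  have hp_norm : ∀ s ∈ Icc (0 : ℝ) 1, ‖p s - x₀‖ ≤ a + s * e := fun s hs =>
    calc ‖p s - x₀‖ = ‖(x - x₀) + s • (y - x)‖ := by simp only [p]; congr 1; abel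
      _ ≤ ‖x - x₀‖ + ‖s • (y - x)‖ := norm_add_le _ _
      _ = ‖x - x₀‖ + s * ‖y - x‖ := by rw [norm_smul, Real.norm_of_nonneg hs.1]
      _ ≤ a + s * e := by gcongr; exact hs.1
  have hderiv : ∀ s ∈ Icc (0 : ℝ) 1,
      HasDerivAt (fun s => f (p s) - f x) (f' (p s) (y - x)) s := fun s hs => by
    have hp' : HasDerivAt p (y - x) s := by
      simpa only [id, one_smul] using ((hasDerivAt_id s).smul_const (y - x)).const_add x
    exact ((hf _ (hp s hs)).comp_hasDerivAt s hp').sub_const _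
  have hbound : ∀ s ∈ Ico (0 : ℝ) 1, ‖f' (p s) (y - x)‖ ≤ ω (a + s * e) * e := fun s hs => by
    have hs' : s ∈ Icc (0 : ℝ) 1 := Ico_subset_Icc_self hs
    have hf'_le := hf' _ (hp s hs')
    have hω_le : ω ‖p s - x₀‖ ≤ ω (a + s * e) :=
      hω (norm_nonneg _) ((norm_nonneg _).trans (hp_norm s hs')) (hp_norm s hs')
    calc ‖f' (p s) (y - x)‖ ≤ ‖f' (p s)‖ * ‖y - x‖ := (f' (p s)).le_opNorm _
      _ ≤ ω (a + s * e) * e :=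
        mul_le_mul (hf'_le.trans hω_le) hxy (norm_nonneg _)
          ((norm_nonneg _).trans (hf'_le.trans hω_le))
  have hB : ∀ s, HasDerivAt (fun s => G (a + s * e) - G a) (ω (a + s * e) * e) s := fun s => by
    have hlin : HasDerivAt (fun s => a + s * e) e s := by
      simpa using ((hasDerivAt_id s).mul_const e).const_add a
    exact ((hG _).comp s hlin).sub_const _
  have := image_norm_le_of_norm_deriv_right_le_deriv_boundary
    (fun s hs => (hderiv s hs).continuousAt.continuousWithinAt)
    (fun s hs => (hderiv s (Ico_subset_Icc_self hs)).hasDerivWithinAt) (by simp [p]) hB hbound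
    (right_mem_Icc.2 zero_le_one)
  simpa [p] using this

noncomputable def holderModulus (l₀ α ν v : ℝ) : ℝ := l₀ * v ^ α + ν

noncomputable def holderPrimitive (l₀ α ν v : ℝ) : ℝ := l₀ * v ^ (α + 1) / (1 + α) + ν * v

section Holder

variable {l₀ α ν : ℝ}

theorem hasDerivAt_holderPrimitive (hα : 0 ≤ α) (v : ℝ) :
    HasDerivAt (holderPrimitive l₀ α ν) (holderModulus l₀ α ν v) v := by
  have hpow := Real.hasDerivAt_rpow_const (x := v) (Or.inr (by linarith : 1 ≤ α + 1))
  have hsum := ((hpow.const_mul l₀).div_const (1 + α)).add ((hasDerivAt_id v).const_mul ν)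
  have hmod : l₀ * ((α + 1) * v ^ (α + 1 - 1)) / (1 + α) + ν * 1 = holderModulus l₀ α ν v := by
    rw [holderModulus, add_sub_cancel_right]
    field_simp
    ring
  exact hmod ▸ hsum

theorem monotoneOn_holderModulus (hl₀ : 0 ≤ l₀) (hα : 0 ≤ α) :
    MonotoneOn (holderModulus l₀ α ν) (Ici 0) := fun u hu w _ huw => by
  unfold holderModulus
  gcongr

theorem continuous_holderPrimitive (hα : 0 ≤ α) : Continuous (holderPrimitive l₀ α ν) :=
  continuous_iff_continuousAt.2 fun v => (hasDerivAt_holderPrimitive hα v).continuousAt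

theorem monotoneOn_holderPrimitive (hl₀ : 0 ≤ l₀) (hα : 0 ≤ α) (hν : 0 ≤ ν) :
    MonotoneOn (holderPrimitive l₀ α ν) (Ici 0) := fun u hu w _ huw => by
  unfold holderPrimitive
  gcongr

theorem norm_sub_sub_le_holderPrimitive {X Y : Type*} [NormedAddCommGroup X] [NormedSpace ℝ X]
    [NormedAddCommGroup Y] [NormedSpace ℝ Y] {F : X → Y} {F' : X → X →L[ℝ] Y} {B : Y →L[ℝ] X}
    {x₀ y z : X} {a e : ℝ} (hl₀ : 0 ≤ l₀) (hα : 0 ≤ α)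
    (hF : ∀ w ∈ segment ℝ y z, HasFDerivAt F (F' w) w)
    (hB : ∀ w ∈ segment ℝ y z,
      ‖ContinuousLinearMap.id ℝ X - B.comp (F' w)‖ ≤ holderModulus l₀ α ν ‖w - x₀‖)
    (hy : ‖y - x₀‖ ≤ a) (hz : ‖z - y‖ ≤ e) :
    ‖(z - B (F z)) - (y - B (F y))‖ ≤ holderPrimitive l₀ α ν (a + e) - holderPrimitive l₀ α ν a :=
  norm_image_sub_le_of_norm_fderiv_le_majorant (f := fun w => w - B (F w))
    (fun w hw => (hasFDerivAt_id w).sub (B.hasFDerivAt.comp w (hF w hw)))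
    (hasDerivAt_holderPrimitive hα) (monotoneOn_holderModulus hl₀ hα) hB hy hz

end Holder

theorem stmt_13_general {X Y : Type*}
    [NormedAddCommGroup X] [NormedSpace ℝ X] [CompleteSpace X]
    [NormedAddCommGroup Y] [NormedSpace ℝ Y] [CompleteSpace Y]
    (D : Set X)
    (F : X → Y) (F' : X → X →L[ℝ] Y)
    (hF : ∀ x ∈ D, HasFDerivAt F (F' x) x)
    (B : Y ≃L[ℝ] X)
    (x0 : X) (R : ℝ) (hball : closedBall x0 R ⊆ D)
    (l0 η α ν : ℝ) (hl0 : 0 < l0) (hη : 0 < η)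
    (hα : α ∈ Ioc (0:ℝ) 1) (hν0 : 0 ≤ ν)
    (hbound : ∀ x ∈ closedBall x0 R,
      ‖ContinuousLinearMap.id ℝ X - (B : Y →L[ℝ] X).comp (F' x)‖ ≤ l0 * ‖x - x0‖ ^ α + ν)
    (hBF0 : ‖B (F x0)‖ ≤ η)
    (g : ℝ → ℝ) (hg : ∀ v, g v = l0 * v ^ (α + 1) / (1 + α) - (1 - ν) * v + η)
    (vstar : ℝ) (hvpos : 0 < vstar) (hvroot : g vstar = 0)
    (hvmin : ∀ w, 0 < w → g w = 0 → vstar ≤ w)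
    (hRv : vstar ≤ R)
    (x : ℕ → X) (hx0 : x 0 = x0) (hxrec : ∀ k, x (k + 1) = x k - B (F (x k))) :
    ∃ xstar, F xstar = 0 ∧ ‖xstar - x0‖ ≤ vstar ∧ Tendsto x atTop (nhds xstar) := by
  subst hx0
  set G := holderPrimitive l0 α ν
  have hgG : ∀ v, g v = G v - v + η := fun v => by rw [hg]; simp only [G, holderPrimitive]; ring
  have hg_cont : Continuous g := by
    rw [funext hgG]
    exact ((continuous_holderPrimitive hα.1.le).sub continuous_id).add continuous_const
  have hg0 : g 0 = η := by
    simp [hgG, G, holderPrimitive, Real.zero_rpow (show α + 1 ≠ 0 by linarith [hα.1])]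
  have hg_nonneg := nonneg_of_mem_Icc_of_minimal_root hg_cont.continuousOn (hg0 ▸ hη) hvroot hvmin
  have hmono : MonotoneOn (fun u => u + g u) (Icc 0 vstar) := fun u hu w hw huw => by
    simp only [hgG]
    linarith [monotoneOn_holderPrimitive hl0.le hα.1.le hν0 hu.1 hw.1 huw]
  have hstep : ∀ a ∈ Icc 0 vstar, ∀ y z, ‖y - x 0‖ ≤ a → ‖z - y‖ ≤ g a →
      ‖(z - B (F z)) - (y - B (F y))‖ ≤ g (a + g a) := by
    intro a ha y z hy hz
    have hga := hg_nonneg a ha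
    have hR : a + g a ≤ R := by linarith [hmono ha (right_mem_Icc.2 hvpos.le) ha.2]
    have hy' : y ∈ closedBall (x 0) R := mem_closedBall_iff_norm.2 (by linarith)
    have hz' : z ∈ closedBall (x 0) R := mem_closedBall_iff_norm.2
      (by linarith [norm_sub_le_norm_sub_add_norm_sub z y (x 0)])
    have hseg := (convex_closedBall (x 0) R).segment_subset hy' hz'
    calc _ ≤ G (a + g a) - G a :=
          norm_sub_sub_le_holderPrimitive (B := (B : Y →L[ℝ] X)) hl0.le hα.1.le
            (fun w hw => hF w (hball (hseg hw))) (fun w hw => hbound w (hseg hw)) hy hz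
      _ = g (a + g a) := by simp only [hgG]; ring
  have h0 : ‖x 1 - x 0‖ ≤ g 0 := by rw [hxrec 0, hg0]; simpa using hBF0
  have hcont : ∀ z ∈ closedBall (x 0) vstar, ContinuousAt (fun z => z - B (F z)) z := fun z hz =>
    continuousAt_id.sub (B.continuous.continuousAt.comp
      (hF z (hball (closedBall_subset_closedBall hRv hz))).continuousAt)
  obtain ⟨xs, hfix, hdist, hlim⟩ :=
    exists_isFixedPt_of_majorant hxrec hvpos.le hg_nonneg hvroot hmono h0 hstep hcont
  refine ⟨xs, B.map_eq_zero_iff.1 ?_, hdist, hlim⟩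
  simpa [IsFixedPt] using hfix

theorem stmt_13 {X Y : Type*}
    [NormedAddCommGroup X] [NormedSpace ℝ X] [CompleteSpace X]
    [NormedAddCommGroup Y] [NormedSpace ℝ Y] [CompleteSpace Y]
    (D : Set X) (hD : IsOpen D)
    (F : X → Y) (F' : X → X →L[ℝ] Y)
    (hF : ∀ x ∈ D, HasFDerivAt F (F' x) x) (hF'cont : ContinuousOn F' D)
    (B : Y ≃L[ℝ] X)
    (x0 : X) (R : ℝ) (hR : 0 < R) (hball : closedBall x0 R ⊆ D)
    (l0 η α ν : ℝ) (hl0 : 0 < l0) (hη : 0 < η)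
    (hα : α ∈ Ioc (0:ℝ) 1) (hν0 : 0 ≤ ν) (hν1 : ν < 1)
    (hbound : ∀ x ∈ closedBall x0 R,
      ‖ContinuousLinearMap.id ℝ X - (B : Y →L[ℝ] X).comp (F' x)‖ ≤ l0 * ‖x - x0‖ ^ α + ν)
    (hBF0 : ‖B (F x0)‖ ≤ η)
    (g : ℝ → ℝ) (hg : ∀ v, g v = l0 * v ^ (α + 1) / (1 + α) - (1 - ν) * v + η)
    (hcond : l0 * η ^ α ≤ (1 - ν) ^ (α + 1) * (α / (1 + α)) ^ α)
    (vstar : ℝ) (hvpos : 0 < vstar) (hvroot : g vstar = 0)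
    (hvmin : ∀ w, 0 < w → g w = 0 → vstar ≤ w)
    (hRv : vstar ≤ R)
    (x : ℕ → X) (hx0 : x 0 = x0) (hxrec : ∀ k, x (k + 1) = x k - B (F (x k))) :
    ∃ xstar, F xstar = 0 ∧ ‖xstar - x0‖ ≤ vstar ∧ Tendsto x atTop (nhds xstar) :=
  stmt_13_general D F F' hF B x0 R hball l0 η α ν hl0 hη hα hν0 hbound hBF0 g hg vstar hvpos hvroot
    hvmin hRv x hx0 hxrec
end
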